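/- Let n ≥ 2 and d ≥ 1, and let N(n,d) = C(n+d-1, n-1). For every k with 2 ≤ k ≤ N(n,d), the inclusion Σ_{n,2d}^{k-1} ⊆ Σ_{n,2d}^k is strict: there exists a form p ∈ Σ_{n,2d}^k with p ∉ Σ_{n,2d}^{k-1}. -/
import Mathlib

open Polynomial




lemma descartes_aux : ∀ (m : ℕ) (P : Polynomial ℝ), P.support.card + P.natDegree ≤ m → P ≠ 0 →
    ∀ R : Finset ℝ, (∀ x ∈ R, 0 < x) → (∀ x ∈ R, P.eval x = 0) → R.card < P.support.card := by
  intro m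
  induction m with
  | zero =>
    intro P hm hP R _ _
    have := Finset.card_pos.mpr (Polynomial.nonempty_support_iff.mpr hP)
    omega
  | succ m ih =>
    intro P hm hP R hpos hroot
    have hcardpos : 0 < P.support.card :=
      Finset.card_pos.mpr (Polynomial.nonempty_support_iff.mpr hP)
    by_cases h0 : P.coeff 0 = 0
    · -- strip a factor of X
      have hdvd : P = P.divX * X := by
        conv_lhs => rw [← P.divX_mul_X_add]
        rw [h0, map_zero, add_zero]
      have hdivX_ne : P.divX ≠ 0 := fun h => hP (by rw [hdvd, h, zero_mul])
      have hndeg : P.natDegree ≠ 0 := by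
        intro h
        exact hP (by rw [Polynomial.eq_C_of_natDegree_eq_zero h, h0, map_zero])
      have hsupp : P.support = P.divX.support.image (· + 1) := by
        ext j
        simp only [Finset.mem_image, Polynomial.mem_support_iff]
        cases j with
        | zero =>
          simp only [h0, ne_eq, not_true_eq_false, false_iff]
          rintro ⟨a, _, ha⟩; omega
        | succ jj =>
          constructor
          · intro hj; exact ⟨jj, by rwa [Polynomial.coeff_divX], rfl⟩
          · rintro ⟨a, ha, haeq⟩
            have : a = jj := by omega
            subst this
            rwa [Polynomial.coeff_divX] at ha
      have hcard : P.support.card = P.divX.support.card := by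
        rw [hsupp, Finset.card_image_of_injective _ (fun a b h => by omega)]
      have hmeas : P.divX.support.card + P.divX.natDegree ≤ m := by
        have h1 := Polynomial.natDegree_divX_eq_natDegree_tsub_one (p := P)
        omega
      have hroots' : ∀ x ∈ R, P.divX.eval x = 0 := by
        intro x hx
        have := hroot x hx
        rw [hdvd] at this
        simp only [Polynomial.eval_mul, Polynomial.eval_X] at this
        rcases mul_eq_zero.mp this with h | h
        · exact h
        · exact absurd h (ne_of_gt (hpos x hx))
      rw [hcard]
      exact ih P.divX hmeas hdivX_ne R hpos hroots'
    · rcases R.eq_empty_or_nonempty with rfl | hRne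
      · simpa using hcardpos
      by_cases hcard1 : P.support.card ≤ 1
      · exfalso
        have hsing : P.support = {0} :=
          Finset.eq_singleton_iff_unique_mem.mpr
            ⟨Polynomial.mem_support_iff.mpr h0, fun j hj => by
              by_contra hne
              have : ({0, j} : Finset ℕ) ⊆ P.support := by
                intro a ha
                simp only [Finset.mem_insert, Finset.mem_singleton] at ha
                rcases ha with rfl | rfl
                · exact Polynomial.mem_support_iff.mpr h0
                · exact hj
              have h2 := Finset.card_le_card this
              rw [Finset.card_insert_of_notMem (by simpa using (Ne.symm hne))] at h2
              simp at h2; omega⟩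
        have hndeg : P.natDegree = 0 := by
          by_contra hne
          have : P.natDegree ∈ P.support := Polynomial.natDegree_mem_support_of_nonzero hP
          rw [hsing] at this
          simp at this; omega
        obtain ⟨x, hx⟩ := hRne
        have := hroot x hx
        rw [Polynomial.eq_C_of_natDegree_eq_zero hndeg] at this
        simp at this
        exact h0 this
      · push_neg at hcard1
        set Q := derivative P with hQdef
        have hndeg : P.natDegree ≠ 0 := by
          intro h
          obtain ⟨j, hj, hjne⟩ : ∃ j ∈ P.support, j ≠ 0 := by
            by_contra hcon
            push_neg at hcon
            have : P.support ⊆ {0} := fun a ha => Finset.mem_singleton.mpr (hcon a ha)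
            have := Finset.card_le_card this
            simp at this; omega
          have := Polynomial.le_natDegree_of_mem_supp j hj
          omega
        have hQne : Q ≠ 0 := by
          intro h
          exact hndeg (Polynomial.natDegree_eq_zero_of_derivative_eq_zero h)
        have hQsupp : Q.support.card ≤ P.support.card - 1 := by
          have hsub : Q.support ⊆ (P.support.erase 0).image (· - 1) := by
            intro j hj
            have hcoeff : Q.coeff j ≠ 0 := Polynomial.mem_support_iff.mp hj
            rw [hQdef, Polynomial.coeff_derivative] at hcoeff
            have hPj : P.coeff (j + 1) ≠ 0 := fun h => hcoeff (by rw [h, zero_mul])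
            exact Finset.mem_image.mpr ⟨j + 1,
              Finset.mem_erase.mpr ⟨by omega, Polynomial.mem_support_iff.mpr hPj⟩, by omega⟩
          calc Q.support.card ≤ ((P.support.erase 0).image (· - 1)).card :=
                Finset.card_le_card hsub
            _ ≤ (P.support.erase 0).card := Finset.card_image_le
            _ = P.support.card - 1 := by
                rw [Finset.card_erase_of_mem (Polynomial.mem_support_iff.mpr h0)]
        -- Rolle construction
        set xmax := R.max' hRne with hxmax
        have hrolle : ∀ x ∈ R.erase xmax, ∃ c, Q.eval c = 0 ∧ x < c ∧
            ∀ z ∈ R, x < z → c < z := by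
          intro x hx
          have hxR := Finset.mem_of_mem_erase hx
          have hfil : (R.filter (fun z => x < z)).Nonempty :=
            ⟨xmax, Finset.mem_filter.mpr ⟨R.max'_mem hRne,
              lt_of_le_of_ne (R.le_max' x hxR) (Finset.ne_of_mem_erase hx)⟩⟩
          set y := (R.filter (fun z => x < z)).min' hfil with hy
          have hymem := Finset.mem_filter.mp ((R.filter (fun z => x < z)).min'_mem hfil)
          have hxy : x < y := hymem.2
          obtain ⟨c, hcI, hc0⟩ := exists_deriv_eq_zero (f := fun t => P.eval t) hxy
            (P.continuous.continuousOn) (by show P.eval x = P.eval y; rw [hroot x hxR, hroot y hymem.1])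
          refine ⟨c, ?_, hcI.1, ?_⟩
          · rw [← Polynomial.deriv]; exact hc0
          · intro z hz hxz
            exact lt_of_lt_of_le hcI.2 (Finset.min'_le _ _ (Finset.mem_filter.mpr ⟨hz, hxz⟩))
        classical
        set F : {x // x ∈ R.erase xmax} → ℝ :=
          fun x => Classical.choose (hrolle x.1 x.2) with hF
        have hFspec : ∀ x : {x // x ∈ R.erase xmax}, Q.eval (F x) = 0 ∧ x.1 < F x ∧
            ∀ z ∈ R, x.1 < z → F x < z :=
          fun x => Classical.choose_spec (hrolle x.1 x.2)
        have hFinj : Function.Injective F := by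
          intro a b hab
          by_contra hne
          have hne' : a.1 ≠ b.1 := fun h => hne (Subtype.ext h)
          rcases lt_trichotomy a.1 b.1 with h | h | h
          · have h1 := (hFspec a).2.2 b.1 (Finset.mem_of_mem_erase b.2) h
            have h2 := (hFspec b).2.1
            rw [hab] at h1; linarith
          · exact hne' h
          · have h1 := (hFspec b).2.2 a.1 (Finset.mem_of_mem_erase a.2) h
            have h2 := (hFspec a).2.1
            exact (ne_of_gt (lt_trans h1 h2)) hab
        set R' : Finset ℝ := (R.erase xmax).attach.image F with hR'
        have hR'card : R'.card = R.card - 1 := by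
          rw [hR', Finset.card_image_of_injective _ hFinj, Finset.card_attach,
            Finset.card_erase_of_mem (R.max'_mem hRne)]
        have hR'pos : ∀ y ∈ R', 0 < y := by
          intro y hy
          obtain ⟨x, _, rfl⟩ := Finset.mem_image.mp hy
          exact lt_trans (hpos x.1 (Finset.mem_of_mem_erase x.2)) (hFspec x).2.1
        have hR'root : ∀ y ∈ R', Q.eval y = 0 := by
          intro y hy
          obtain ⟨x, _, rfl⟩ := Finset.mem_image.mp hy
          exact (hFspec x).1
        have hmeas : Q.support.card + Q.natDegree ≤ m := by
          have h5 : Q.natDegree < P.natDegree := Polynomial.natDegree_derivative_lt hndeg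
          omega
        have := ih Q hmeas hQne R' hR'pos hR'root
        omega

/-- A nonzero real polynomial has fewer distinct positive roots than monomials. -/
lemma descartes (P : Polynomial ℝ) (hP : P ≠ 0) (R : Finset ℝ)
    (hpos : ∀ x ∈ R, 0 < x) (hroot : ∀ x ∈ R, P.eval x = 0) :
    R.card < P.support.card :=
  descartes_aux (P.support.card + P.natDegree) P le_rfl hP R hpos hroot


section Curve

/-- Base-`(2d+1)` encoding of an exponent vector. -/
def psiFn (n d : ℕ) (γ : Fin n →₀ ℕ) : ℕ := ∑ i : Fin n, γ i * (2 * d + 1) ^ (i : ℕ)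

lemma digits_inj (M : ℕ) : ∀ (n : ℕ) (a b : Fin n → ℕ),
    (∀ i, a i < M) → (∀ i, b i < M) →
    (∑ i, a i * M ^ (i : ℕ)) = (∑ i, b i * M ^ (i : ℕ)) → ∀ i, a i = b i := by
  intro n
  induction n with
  | zero => intro a b _ _ _ i; exact i.elim0
  | succ n ih =>
    intro a b ha hb hsum
    have hrew : ∀ c : Fin (n + 1) → ℕ,
        (∑ i : Fin (n + 1), c i * M ^ (i : ℕ))
          = c 0 + M * ∑ i : Fin n, c i.succ * M ^ (i : ℕ) := by
      intro c
      rw [Fin.sum_univ_succ, Finset.mul_sum]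
      simp only [Fin.val_zero, pow_zero, mul_one, Fin.val_succ]
      congr 1
      refine Finset.sum_congr rfl fun i _ => ?_
      rw [pow_succ]
      ring
    rw [hrew a, hrew b] at hsum
    have hM : 0 < M := lt_of_le_of_lt (Nat.zero_le _) (ha 0)
    have h0 : a 0 = b 0 := by
      have := congrArg (· % M) hsum
      simpa [Nat.add_mul_mod_self_left, Nat.mod_eq_of_lt (ha 0), Nat.mod_eq_of_lt (hb 0)]
        using this
    have hrest : (∑ i : Fin n, a i.succ * M ^ (i : ℕ))
        = ∑ i : Fin n, b i.succ * M ^ (i : ℕ) := by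
      rw [h0] at hsum
      have := Nat.add_left_cancel hsum
      exact Nat.eq_of_mul_eq_mul_left hM this
    have htail := ih (fun i => a i.succ) (fun i => b i.succ)
      (fun i => ha _) (fun i => hb _) hrest
    intro i
    rcases Fin.eq_zero_or_eq_succ i with rfl | ⟨j, rfl⟩
    · exact h0
    · exact htail j

lemma psiFn_inj {n d : ℕ} (γ δ : Fin n →₀ ℕ) (hγ : ∀ i, γ i ≤ d) (hδ : ∀ i, δ i ≤ d)
    (h : psiFn n d γ = psiFn n d δ) : γ = δ := by
  have := digits_inj (2 * d + 1) n γ δ (fun i => by have := hγ i; omega)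
    (fun i => by have := hδ i; omega) h
  exact Finsupp.ext this

/-- The moment curve adapted to base-`(2d+1)` encoding. -/
noncomputable def curvePt (n d : ℕ) (τ : ℝ) : Fin n → ℝ := fun i => τ ^ ((2 * d + 1) ^ (i : ℕ))

/-- The univariate polynomial attached to a multivariate one via the curve. -/
noncomputable def uniPoly (n d : ℕ) (f : MvPolynomial (Fin n) ℝ) : Polynomial ℝ :=
  ∑ γ ∈ f.support, Polynomial.C (MvPolynomial.coeff γ f) * Polynomial.X ^ (psiFn n d γ)

lemma prod_curve_pow (n d : ℕ) (τ : ℝ) (γ : Fin n →₀ ℕ) :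
    (∏ i ∈ γ.support, (curvePt n d τ) i ^ γ i) = τ ^ (psiFn n d γ) := by
  rw [psiFn]
  rw [Finset.prod_subset (Finset.subset_univ γ.support)
    (fun i _ hi => by rw [Finsupp.notMem_support_iff.mp hi, pow_zero])]
  rw [Finset.prod_congr rfl (fun i _ => by
    rw [curvePt, ← pow_mul, mul_comm ((2 * d + 1) ^ (i : ℕ)) (γ i)])]
  rw [Finset.prod_pow_eq_pow_sum]

lemma eval_curvePt_eq (n d : ℕ) (f : MvPolynomial (Fin n) ℝ) (τ : ℝ) :
    MvPolynomial.eval (curvePt n d τ) f = (uniPoly n d f).eval τ := by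
  rw [MvPolynomial.eval_eq, uniPoly, Polynomial.eval_finset_sum]
  refine Finset.sum_congr rfl fun γ _ => ?_
  rw [Polynomial.eval_mul, Polynomial.eval_C, Polynomial.eval_pow, Polynomial.eval_X,
    prod_curve_pow]

lemma uniPoly_support (n d : ℕ) (f : MvPolynomial (Fin n) ℝ) :
    (uniPoly n d f).support ⊆ f.support.image (psiFn n d) := by
  intro m hm
  have hc := Polynomial.mem_support_iff.mp hm
  by_contra hmem
  apply hc
  rw [uniPoly, Polynomial.finset_sum_coeff]
  refine Finset.sum_eq_zero fun γ hγ => ?_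
  rw [Polynomial.coeff_C_mul, Polynomial.coeff_X_pow, if_neg, mul_zero]
  intro h
  exact hmem (Finset.mem_image.mpr ⟨γ, hγ, h ▸ rfl⟩)

end Curve


/-- The finset of exponent vectors of total degree `d` in `n` variables. -/
noncomputable def expSet (n d : ℕ) : Finset (Fin n →₀ ℕ) :=
  Finset.image (fun s : Sym (Fin n) d => Multiset.toFinsupp (s : Multiset (Fin n))) Finset.univ

lemma expSet_degree (n d : ℕ) : ∀ γ ∈ expSet n d, γ.degree = d := by
  intro γ hγ
  obtain ⟨s, _, rfl⟩ := Finset.mem_image.mp hγ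
  have : (Multiset.toFinsupp (s : Multiset (Fin n))).degree
      = ∑ a ∈ (s : Multiset (Fin n)).toFinset, (s : Multiset (Fin n)).count a := by
    rw [Finsupp.degree]
    refine Finset.sum_congr (by rw [Multiset.toFinsupp_support]) fun a _ => ?_
    rw [Multiset.toFinsupp_apply]
  rw [this, Multiset.toFinset_sum_count_eq]
  exact s.2

lemma card_expSet (n d : ℕ) : (expSet n d).card = (n + d - 1).choose d := by
  rw [expSet, Finset.card_image_of_injective _ (fun s t h => ?_), Finset.card_univ,
    Sym.card_sym_eq_choose, Fintype.card_fin]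
  have h2 : (s : Multiset (Fin n)) = (t : Multiset (Fin n)) :=
    Multiset.toFinsupp.injective h
  exact Subtype.ext h2


lemma coeff_sum_C_mul_X_pow {k : ℕ} (c : Fin k → ℝ) (e : Fin k → ℕ)
    (hinj : Function.Injective e) (i₀ : Fin k) :
    (∑ i : Fin k, Polynomial.C (c i) * Polynomial.X ^ (e i)).coeff (e i₀) = c i₀ := by
  rw [Polynomial.finset_sum_coeff, Finset.sum_eq_single i₀]
  · rw [Polynomial.coeff_C_mul, Polynomial.coeff_X_pow, if_pos rfl, mul_one]
  · intro b _ hne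
    rw [Polynomial.coeff_C_mul, Polynomial.coeff_X_pow,
      if_neg (fun hh => hne (hinj hh.symm)), mul_zero]
  · intro hmem; exact absurd (Finset.mem_univ i₀) hmem

lemma support_sum_C_mul_X_pow {k : ℕ} (c : Fin k → ℝ) (e : Fin k → ℕ) :
    (∑ i : Fin k, Polynomial.C (c i) * Polynomial.X ^ (e i)).support
      ⊆ Finset.image e Finset.univ := by
  intro m hm
  have hc := Polynomial.mem_support_iff.mp hm
  by_contra hmem
  apply hc
  rw [Polynomial.finset_sum_coeff]
  refine Finset.sum_eq_zero fun i _ => ?_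
  rw [Polynomial.coeff_C_mul, Polynomial.coeff_X_pow, if_neg, mul_zero]
  intro hh
  exact hmem (Finset.mem_image.mpr ⟨i, Finset.mem_univ i, hh ▸ rfl⟩)

open MvPolynomial

/-- `F_{n,d}^k`: real forms of degree `d` in `n` variables with at most `k` monomials. -/
def IsFormK (n d k : ℕ) (h : MvPolynomial (Fin n) ℝ) : Prop :=
  h.IsHomogeneous d ∧ h.support.card ≤ k

/-- `Σ_{n,2d}^k`: finite sums of squares of forms in `F_{n,d}^k`. -/
def SigmaSOS (n d k : ℕ) : Set (MvPolynomial (Fin n) ℝ) :=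
  { p | ∃ (m : ℕ) (f : Fin m → MvPolynomial (Fin n) ℝ),
      (∀ j, IsFormK n d k (f j)) ∧ p = ∑ j, (f j) ^ 2 }

theorem sigma_sos_strict_mono (n d k : ℕ) (hn : 2 ≤ n) (hd : 1 ≤ d)
    (hk2 : 2 ≤ k) (hkN : k ≤ Nat.choose (n + d - 1) (n - 1)) :
    SigmaSOS n d (k - 1) ⊆ SigmaSOS n d k ∧
    ∃ p : MvPolynomial (Fin n) ℝ, p ∈ SigmaSOS n d k ∧ p ∉ SigmaSOS n d (k - 1) := by
  classical
  constructor
  · rintro p ⟨m, f, hf, rfl⟩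
    exact ⟨m, f, fun j => ⟨(hf j).1, le_trans (hf j).2 (by omega)⟩, rfl⟩
  haveI : NeZero k := ⟨by omega⟩
  -- `k` many exponent vectors of degree `d`
  have hcard : k ≤ (expSet n d).card := by
    rw [card_expSet]
    have h1 : n - 1 ≤ n + d - 1 := by omega
    have h2 : (n + d - 1) - (n - 1) = d := by omega
    have hsymm := Nat.choose_symm h1
    rw [h2] at hsymm
    rwa [← hsymm] at hkN
  obtain ⟨T, hTsub, hTcard⟩ := Finset.exists_subset_card_eq hcard
  have hTfin : Fintype.card ↥T = k := by rw [Fintype.card_coe]; exact hTcard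
  set e := Fintype.equivFinOfCardEq hTfin with he
  set α : Fin k → (Fin n →₀ ℕ) := fun i => ((e.symm i : ↥T) : Fin n →₀ ℕ) with hα
  have hαdeg : ∀ i, (α i).degree = d := fun i => expSet_degree n d _ (hTsub (e.symm i).2)
  have hαcoord : ∀ i j, α i j ≤ d := fun i j =>
    le_trans (Finsupp.le_degree j (α i)) (le_of_eq (hαdeg i))
  have hαinj : Function.Injective α := by
    intro i j hij
    have h3 : (e.symm i : ↥T) = e.symm j := Subtype.ext hij
    simpa using congrArg e h3
  have hψinj : Function.Injective (fun i => psiFn n d (α i)) := by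
    intro i j hij
    exact hαinj (psiFn_inj _ _ (hαcoord i) (hαcoord j) hij)
  -- evaluation points on the moment curve
  set pts : Fin k → ℝ := fun j => (j : ℕ) + 1 with hpts
  have hpts_pos : ∀ j, (0 : ℝ) < pts j := fun j => by positivity
  have hpts_inj : Function.Injective pts := by
    intro i j hij
    have h4 : ((i : ℕ) : ℝ) = ((j : ℕ) : ℝ) := by
      have := hij
      simp only [hpts] at this
      linarith
    exact Fin.ext (Nat.cast_injective h4)
  -- the generalized Vandermonde matrix is invertible
  set Mat : Matrix (Fin k) (Fin k) ℝ :=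
    Matrix.of (fun j i => pts j ^ (psiFn n d (α i))) with hMat
  have hker : ∀ c : Fin k → ℝ, Mat.mulVec c = 0 → c = 0 := by
    intro c hc
    set Pc : Polynomial ℝ :=
      ∑ i : Fin k, Polynomial.C (c i) * Polynomial.X ^ (psiFn n d (α i)) with hPc
    have hPceval : ∀ j, Pc.eval (pts j) = 0 := by
      intro j
      have h5 := congrFun hc j
      simp only [Matrix.mulVec, dotProduct, hMat, Matrix.of_apply,
        Pi.zero_apply] at h5
      rw [hPc, Polynomial.eval_finset_sum]
      simp only [Polynomial.eval_mul, Polynomial.eval_C, Polynomial.eval_pow,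
        Polynomial.eval_X]
      rw [← h5]
      exact Finset.sum_congr rfl fun i _ => mul_comm _ _
    have hPc0 : Pc = 0 := by
      by_contra hne
      have hlt := descartes Pc hne (Finset.image pts Finset.univ)
        (by intro x hx; obtain ⟨j, _, rfl⟩ := Finset.mem_image.mp hx; exact hpts_pos j)
        (by intro x hx; obtain ⟨j, _, rfl⟩ := Finset.mem_image.mp hx; exact hPceval j)
      have hc1 : (Finset.image pts Finset.univ).card = k := by
        rw [Finset.card_image_of_injective _ hpts_inj, Finset.card_univ, Fintype.card_fin]
      have hc2 : Pc.support.card ≤ k := by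
        calc Pc.support.card
            ≤ (Finset.image (fun i => psiFn n d (α i)) Finset.univ).card :=
              Finset.card_le_card (support_sum_C_mul_X_pow _ _)
          _ ≤ k := le_trans Finset.card_image_le (by
              rw [Finset.card_univ, Fintype.card_fin])
      omega
    funext i
    have h6 := congrArg (fun P : Polynomial ℝ => P.coeff (psiFn n d (α i))) hPc0
    simp only [Polynomial.coeff_zero] at h6
    rw [hPc, coeff_sum_C_mul_X_pow _ _ hψinj i] at h6
    simpa using h6
  have hsurj : Function.Surjective Mat.mulVecLin := by
    rw [← LinearMap.injective_iff_surjective]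
    rw [← LinearMap.ker_eq_bot, LinearMap.ker_eq_bot']
    intro c hc
    exact hker c (by rwa [Matrix.mulVecLin_apply] at hc)
  obtain ⟨c, hcv⟩ := hsurj (Pi.single (0 : Fin k) (1 : ℝ))
  rw [Matrix.mulVecLin_apply] at hcv
  -- the witness form
  set h : MvPolynomial (Fin n) ℝ := ∑ i : Fin k, (MvPolynomial.monomial (α i)) (c i) with hh
  have hh_homog : h.IsHomogeneous d :=
    MvPolynomial.IsHomogeneous.sum _ _ _
      (fun i _ => MvPolynomial.isHomogeneous_monomial _ (hαdeg i))
  have hh_card : h.support.card ≤ k := by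
    have hsub : h.support ⊆ Finset.image α Finset.univ := by
      refine le_trans MvPolynomial.support_sum ?_
      intro γ hγ
      obtain ⟨i, _, hi⟩ := Finset.mem_biUnion.mp hγ
      rw [MvPolynomial.support_monomial] at hi
      by_cases hci : c i = 0
      · rw [if_pos hci] at hi; exact absurd hi (Finset.notMem_empty γ)
      · rw [if_neg hci] at hi
        exact Finset.mem_image.mpr ⟨i, Finset.mem_univ i, (Finset.mem_singleton.mp hi) ▸ rfl⟩
    calc h.support.card ≤ (Finset.image α Finset.univ).card := Finset.card_le_card hsub
      _ ≤ k := le_trans Finset.card_image_le (by rw [Finset.card_univ, Fintype.card_fin])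
  have hh_eval : ∀ j : Fin k,
      MvPolynomial.eval (curvePt n d (pts j)) h = (Pi.single (0 : Fin k) (1 : ℝ) : Fin k → ℝ) j := by
    intro j
    rw [hh, map_sum]
    have hterm : ∀ i : Fin k,
        MvPolynomial.eval (curvePt n d (pts j)) ((MvPolynomial.monomial (α i)) (c i))
          = Mat j i * c i := by
      intro i
      rw [MvPolynomial.eval_monomial, Finsupp.prod]
      rw [prod_curve_pow n d (pts j) (α i)]
      rw [hMat]
      exact mul_comm _ _
    rw [Finset.sum_congr rfl (fun i _ => hterm i)]
    have h7 := congrFun hcv j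
    simpa only [Matrix.mulVec, dotProduct] using h7
  refine ⟨h ^ 2, ⟨1, fun _ => h, fun _ => ⟨hh_homog, hh_card⟩, (Fin.sum_univ_one (fun _ : Fin 1 => h ^ 2)).symm⟩, ?_⟩
  rintro ⟨m, f, hform, hsum⟩
  -- every square in the decomposition vanishes at the `k - 1` points `pts j`, `j ≠ 0`
  have hzero : ∀ (l : Fin m) (j : Fin k), j ≠ 0 →
      MvPolynomial.eval (curvePt n d (pts j)) (f l) = 0 := by
    intro l j hj
    have h8 : MvPolynomial.eval (curvePt n d (pts j)) (h ^ 2) = 0 := by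
      rw [map_pow, hh_eval j, Pi.single_eq_of_ne hj]
      norm_num
    rw [hsum, map_sum] at h8
    simp only [map_pow] at h8
    have h9 := (Finset.sum_eq_zero_iff_of_nonneg
      (fun l _ => sq_nonneg (MvPolynomial.eval (curvePt n d (pts j)) (f l)))).mp h8
      l (Finset.mem_univ l)
    exact pow_eq_zero_iff (by norm_num : (2 : ℕ) ≠ 0) |>.mp h9
  -- hence they vanish identically on the curve, in particular at `pts 0 = 1`
  have hone : ∀ l : Fin m, MvPolynomial.eval (curvePt n d (pts 0)) (f l) = 0 := by
    intro l
    have hU0 : uniPoly n d (f l) = 0 := by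
      by_contra hne
      set R : Finset ℝ := Finset.image pts (Finset.univ.erase 0) with hR
      have hRcard : R.card = k - 1 := by
        rw [hR, Finset.card_image_of_injective _ hpts_inj,
          Finset.card_erase_of_mem (Finset.mem_univ _), Finset.card_univ, Fintype.card_fin]
      have hlt := descartes _ hne R
        (by intro x hx; obtain ⟨j, _, rfl⟩ := Finset.mem_image.mp hx; exact hpts_pos j)
        (by intro x hx
            obtain ⟨j, hj, rfl⟩ := Finset.mem_image.mp hx
            rw [← eval_curvePt_eq]
            exact hzero l j (Finset.ne_of_mem_erase hj))
      have hsc : (uniPoly n d (f l)).support.card ≤ k - 1 := by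
        calc (uniPoly n d (f l)).support.card
            ≤ ((f l).support.image (psiFn n d)).card :=
              Finset.card_le_card (uniPoly_support n d (f l))
          _ ≤ (f l).support.card := Finset.card_image_le
          _ ≤ k - 1 := (hform l).2
      omega
    rw [eval_curvePt_eq, hU0, Polynomial.eval_zero]
  have hfinal : MvPolynomial.eval (curvePt n d (pts 0)) (h ^ 2) = 0 := by
    rw [hsum, map_sum]
    refine Finset.sum_eq_zero fun l _ => ?_
    rw [map_pow, hone l]
    norm_num
  rw [map_pow, hh_eval 0, Pi.single_eq_same] at hfinal
  norm_num at hfinal
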